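/- Let I ⊆ ℝ∖{0} be an open interval and let v : I → ℂ be twice differentiable with v(s) ∉ {0, 1, −1} for all s ∈ I, satisfying v″ − (2v/(v²−1))·(v′)² + v′/s + v/(2s) + v(v²+1)/(4(v²−1)) = 0 on I. Then q := v² satisfies the Painlevé V equation q″ − (1/(q−1) + 1/(2q))·(q′)² + q′/s + q/s + q(q+1)/(2(q−1)) = 0 on I. -/

import Mathlib

/-!
Put `q = v²`. Then `q' = 2vv'` and `q'' = 2v'² + 2vv''`, and substituting these into the
Painlevé V expression yields exactly `2v` times the expression of the equation for `v`;
the only cancellation needed is `q'²/(2q) = 2v'²`, which is where `v ≠ 0` enters.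
-/

open Filter Topology

section Jet

variable {K : Type*} [Field K]

def reducedVEquation (s v v' v'' : K) : K :=
  v'' - (2 * v / (v ^ 2 - 1)) * v' ^ 2 + v' / s + v / (2 * s)
    + v * (v ^ 2 + 1) / (4 * (v ^ 2 - 1))

def painleveVZeroEquation (s q q' q'' : K) : K :=
  q'' - (1 / (q - 1) + 1 / (2 * q)) * q' ^ 2 + q' / s + q / s
    + q * (q + 1) / (2 * (q - 1))

theorem painleveVZeroEquation_sq [CharZero K] {v : K} (hv : v ≠ 0) (s v' v'' : K) :
    painleveVZeroEquation s (v ^ 2) (2 * v * v') (2 * v' ^ 2 + 2 * v * v'')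
      = 2 * v * reducedVEquation s v v' v'' := by
  unfold painleveVZeroEquation reducedVEquation
  have hv2 : v ^ 2 * (v ^ 2)⁻¹ = 1 := mul_inv_cancel₀ (pow_ne_zero 2 hv)
  have h24 : (2 * (v ^ 2 - 1))⁻¹ = 2 * (4 * (v ^ 2 - 1))⁻¹ := by
    rw [mul_inv, mul_inv]
    ring
  linear_combination -2 * v' ^ 2 * hv2 + v ^ 2 * (v ^ 2 + 1) * h24

end Jet

section SecondDerivative

variable {𝕜 𝔸 : Type*} [NontriviallyNormedField 𝕜] [NormedCommRing 𝔸] [NormedAlgebra 𝕜 𝔸]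
  {v : 𝕜 → 𝔸} {x : 𝕜}

theorem deriv_sq_eventuallyEq (hv : ∀ᶠ y in 𝓝 x, DifferentiableAt 𝕜 v y) :
    deriv (fun y => v y ^ 2) =ᶠ[𝓝 x] fun y => 2 * v y * deriv v y := by
  filter_upwards [hv] with y hy
  rw [deriv_fun_pow hy]
  simp

theorem hasDerivAt_deriv_sq (hv : ∀ᶠ y in 𝓝 x, DifferentiableAt 𝕜 v y)
    (hv' : DifferentiableAt 𝕜 (deriv v) x) :
    HasDerivAt (deriv fun y => v y ^ 2) (2 * deriv v x ^ 2 + 2 * v x * deriv (deriv v) x) x := by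
  have h := ((hv.self_of_nhds.hasDerivAt.const_mul 2).mul hv'.hasDerivAt).congr_of_eventuallyEq
    (deriv_sq_eventuallyEq hv)
  exact h.congr_deriv (by ring)

end SecondDerivative

theorem v_equation_to_painleveV
    (I : Set ℝ) (hIopen : IsOpen I) (v : ℝ → ℂ)
    (hdiff : ∀ s ∈ I, DifferentiableAt ℝ v s ∧ DifferentiableAt ℝ (deriv v) s)
    (hval : ∀ s ∈ I, v s ≠ 0 ∧ v s ≠ 1 ∧ v s ≠ -1)
    (heq : ∀ s ∈ I,
      deriv (deriv v) s - (2 * v s / ((v s) ^ 2 - 1)) * (deriv v s) ^ 2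
        + deriv v s / (s : ℂ) + v s / (2 * (s : ℂ))
        + v s * ((v s) ^ 2 + 1) / (4 * ((v s) ^ 2 - 1)) = 0) :
    ∀ s ∈ I,
      DifferentiableAt ℝ (fun x : ℝ => (v x) ^ 2) s ∧
      DifferentiableAt ℝ (deriv (fun x : ℝ => (v x) ^ 2)) s ∧
      deriv (deriv (fun x : ℝ => (v x) ^ 2)) s
        - (1 / ((v s) ^ 2 - 1) + 1 / (2 * (v s) ^ 2))
          * (deriv (fun x : ℝ => (v x) ^ 2) s) ^ 2
        + deriv (fun x : ℝ => (v x) ^ 2) s / (s : ℂ)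
        + (v s) ^ 2 / (s : ℂ)
        + (v s) ^ 2 * ((v s) ^ 2 + 1) / (2 * ((v s) ^ 2 - 1)) = 0 := by
  intro s hs
  have hv_near : ∀ᶠ x in 𝓝 s, DifferentiableAt ℝ v x :=
    eventually_of_mem (hIopen.mem_nhds hs) fun x hx => (hdiff x hx).1
  have hq'' := hasDerivAt_deriv_sq hv_near (hdiff s hs).2
  refine ⟨(hdiff s hs).1.pow 2, hq''.differentiableAt, ?_⟩
  have hq' := (deriv_sq_eventuallyEq hv_near).eq_of_nhds
  have key := painleveVZeroEquation_sq (hval s hs).1 (s : ℂ) (deriv v s) (deriv (deriv v) s)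
  rw [reducedVEquation, heq s hs, mul_zero] at key
  rw [hq''.deriv, hq']
  exact key
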